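/- Let k ≥ 1, let Λ₁ ≤ Λ₂ ≤ … ≤ Λₖ ≤ Λ_{k+1} be real numbers, let δ₁ ≥ δ₂ ≥ … ≥ δ_k > 0 be a non-increasing sequence of positive real numbers, and let (b_{ij})_{1≤i,j≤k} be real numbers that are symmetric in i and j (b_{ij} = b_{ji}). Then Σ_{i,j=1}^k δ_i (Λ_{k+1} − Λ_i)(Λ_i − Λ_j)² b_{ij}² + Σ_{i,j=1}^k δ_i (Λ_{k+1} − Λ_i)²(Λ_i − Λ_j) b_{ij}² = (1/2) Σ_{i,j=1}^k (Λ_{k+1} − Λ_i)(Λ_{k+1} − Λ_j)(Λ_i − Λ_j)(δ_i − δ_j) b_{ij}², and this quantity is ≤ 0. -/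

import Mathlib

/-!
Combining the two sums termwise gives `∑ᵢⱼ δᵢ g(i, j)` with
`g(i, j) = (Λ_{k+1} - Λᵢ)(Λ_{k+1} - Λⱼ)(Λᵢ - Λⱼ) b²ᵢⱼ`, which is antisymmetric in `(i, j)`;
averaging with the sum obtained by swapping `i` and `j` yields the right-hand side. Each of its
terms is a nonnegative weight times `(Λᵢ - Λⱼ)(δᵢ - δⱼ) ≤ 0`, since `Λ` and `δ` vary oppositely.
-/

open Finset

section Symmetrization

variable {ι R : Type*} [Fintype ι]

theorem two_mul_sum_sum_mul_eq_sum_sum_sub_mul_of_antisymm [CommRing R] (δ : ι → R)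
    {g : ι → ι → R} (hg : ∀ i j, g j i = -g i j) :
    2 * ∑ i, ∑ j, δ i * g i j = ∑ i, ∑ j, (δ i - δ j) * g i j := by
  have hswap : ∑ i, ∑ j, δ j * g i j = -∑ i, ∑ j, δ i * g i j := by
    rw [Finset.sum_comm, ← Finset.sum_neg_distrib]
    refine Finset.sum_congr rfl fun i _ => ?_
    rw [← Finset.sum_neg_distrib]
    exact Finset.sum_congr rfl fun j _ => by rw [hg i j, mul_neg]
  simp only [sub_mul, Finset.sum_sub_distrib, hswap]
  ring

theorem sum_sum_mul_sub_mul_sub_nonpos [Ring R] [LinearOrder R] [IsStrictOrderedRing R]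
    {f g : ι → R} (hfg : Antivary f g) {w : ι → ι → R} (hw : ∀ i j, 0 ≤ w i j) :
    ∑ i, ∑ j, w i j * ((f i - f j) * (g i - g j)) ≤ 0 :=
  Finset.sum_nonpos fun i _ => Finset.sum_nonpos fun j _ =>
    mul_nonpos_of_nonneg_of_nonpos (hw i j) (hfg.sub_mul_sub_nonpos j i)

end Symmetrization

section CrossTerms

variable {ι : Type*} [Fintype ι] (L : ℝ) (μ δ : ι → ℝ) {c : ι → ι → ℝ}

theorem sum_sum_cross_terms_eq (hc : ∀ i j, c i j = c j i) :
    ∑ i, ∑ j, δ i * (L - μ i) * (μ i - μ j) ^ 2 * c i j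
      + ∑ i, ∑ j, δ i * (L - μ i) ^ 2 * (μ i - μ j) * c i j
      = 1 / 2 * ∑ i, ∑ j, (L - μ i) * (L - μ j) * (μ i - μ j) * (δ i - δ j) * c i j := by
  set g : ι → ι → ℝ := fun i j => (L - μ i) * (L - μ j) * (μ i - μ j) * c i j
  have hg : ∀ i j, g j i = -g i j := fun i j => by simp only [g, hc j i]; ring
  have hcombine : ∑ i, ∑ j, δ i * (L - μ i) * (μ i - μ j) ^ 2 * c i j
      + ∑ i, ∑ j, δ i * (L - μ i) ^ 2 * (μ i - μ j) * c i j
      = ∑ i, ∑ j, δ i * g i j := by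
    simp only [← Finset.sum_add_distrib]
    exact Finset.sum_congr rfl fun i _ => Finset.sum_congr rfl fun j _ => by simp only [g]; ring
  have hreorder : ∑ i, ∑ j, (L - μ i) * (L - μ j) * (μ i - μ j) * (δ i - δ j) * c i j
      = ∑ i, ∑ j, (δ i - δ j) * g i j :=
    Finset.sum_congr rfl fun i _ => Finset.sum_congr rfl fun j _ => by simp only [g]; ring
  rw [hcombine, hreorder, ← two_mul_sum_sum_mul_eq_sum_sum_sub_mul_of_antisymm δ hg]
  ring

theorem sum_sum_cross_terms_nonpos (hμL : ∀ i, μ i ≤ L) (hμδ : Antivary μ δ)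
    (hc : ∀ i j, 0 ≤ c i j) :
    ∑ i, ∑ j, (L - μ i) * (L - μ j) * (μ i - μ j) * (δ i - δ j) * c i j ≤ 0 := by
  have hw : ∀ i j, 0 ≤ (L - μ i) * (L - μ j) * c i j := fun i j =>
    mul_nonneg (mul_nonneg (sub_nonneg.2 (hμL i)) (sub_nonneg.2 (hμL j))) (hc i j)
  calc _ = ∑ i, ∑ j, (L - μ i) * (L - μ j) * c i j * ((μ i - μ j) * (δ i - δ j)) :=
        Finset.sum_congr rfl fun i _ => Finset.sum_congr rfl fun j _ => by ring
    _ ≤ 0 := sum_sum_mul_sub_mul_sub_nonpos hμδ hw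

end CrossTerms

theorem symmetrization_identity_general
    (k : ℕ)
    (Λ : Fin (k + 1) → ℝ) (hΛmono : Monotone Λ)
    (δ : Fin k → ℝ) (hδanti : Antitone δ)
    (b : Fin k → Fin k → ℝ) (hb_symm : ∀ i j, b i j = b j i) :
    (∑ i : Fin k, ∑ j : Fin k,
        δ i * (Λ (Fin.last k) - Λ i.castSucc) * (Λ i.castSucc - Λ j.castSucc) ^ 2 * (b i j) ^ 2
      + ∑ i : Fin k, ∑ j : Fin k,
        δ i * (Λ (Fin.last k) - Λ i.castSucc) ^ 2 * (Λ i.castSucc - Λ j.castSucc) * (b i j) ^ 2)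
      = (1 / 2) * ∑ i : Fin k, ∑ j : Fin k,
        (Λ (Fin.last k) - Λ i.castSucc) * (Λ (Fin.last k) - Λ j.castSucc)
          * (Λ i.castSucc - Λ j.castSucc) * (δ i - δ j) * (b i j) ^ 2
    ∧ (∑ i : Fin k, ∑ j : Fin k,
        δ i * (Λ (Fin.last k) - Λ i.castSucc) * (Λ i.castSucc - Λ j.castSucc) ^ 2 * (b i j) ^ 2
      + ∑ i : Fin k, ∑ j : Fin k,
        δ i * (Λ (Fin.last k) - Λ i.castSucc) ^ 2 * (Λ i.castSucc - Λ j.castSucc) * (b i j) ^ 2)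
      ≤ 0 := by
  have hidentity := sum_sum_cross_terms_eq (Λ (Fin.last k)) (fun i => Λ i.castSucc) δ
    (c := fun i j => b i j ^ 2) fun i j => by rw [hb_symm]
  have hμL : ∀ i : Fin k, Λ i.castSucc ≤ Λ (Fin.last k) := fun i => hΛmono (Fin.le_last _)
  have hμδ : Antivary (fun i : Fin k => Λ i.castSucc) δ :=
    (hΛmono.comp Fin.strictMono_castSucc.monotone).antivary hδanti
  refine ⟨hidentity, hidentity ▸ ?_⟩
  exact mul_nonpos_of_nonneg_of_nonpos (by norm_num)
    (sum_sum_cross_terms_nonpos _ _ δ hμL hμδ fun i j => sq_nonneg (b i j))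

/-- The symmetrization identity and sign for the b_{ij} cross terms. -/
theorem symmetrization_identity
    (k : ℕ) (hk : 1 ≤ k)
    (Λ : Fin (k + 1) → ℝ) (hΛmono : Monotone Λ)
    (δ : Fin k → ℝ) (hδpos : ∀ i, 0 < δ i) (hδanti : Antitone δ)
    (b : Fin k → Fin k → ℝ) (hb_symm : ∀ i j, b i j = b j i) :
    (∑ i : Fin k, ∑ j : Fin k,
        δ i * (Λ (Fin.last k) - Λ i.castSucc) * (Λ i.castSucc - Λ j.castSucc) ^ 2 * (b i j) ^ 2
      + ∑ i : Fin k, ∑ j : Fin k,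
        δ i * (Λ (Fin.last k) - Λ i.castSucc) ^ 2 * (Λ i.castSucc - Λ j.castSucc) * (b i j) ^ 2)
      = (1 / 2) * ∑ i : Fin k, ∑ j : Fin k,
        (Λ (Fin.last k) - Λ i.castSucc) * (Λ (Fin.last k) - Λ j.castSucc)
          * (Λ i.castSucc - Λ j.castSucc) * (δ i - δ j) * (b i j) ^ 2
    ∧ (∑ i : Fin k, ∑ j : Fin k,
        δ i * (Λ (Fin.last k) - Λ i.castSucc) * (Λ i.castSucc - Λ j.castSucc) ^ 2 * (b i j) ^ 2
      + ∑ i : Fin k, ∑ j : Fin k,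
        δ i * (Λ (Fin.last k) - Λ i.castSucc) ^ 2 * (Λ i.castSucc - Λ j.castSucc) * (b i j) ^ 2)
      ≤ 0 :=
  symmetrization_identity_general k Λ hΛmono δ hδanti b hb_symm
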